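/- arXiv:0911.3067 — 5 statements merged into one kernel-verified Lean document; each statement's English description precedes it below -/
import Mathlib

section
/- Let A be an affine subspace of ℝⁿ and let σ(θ) = Σ max(-θⱼ,0). If θ minimizes σ on A (lexicographically also minimizing the number of nonpositive coordinates) and there exists v in the direction space of A with vⱼ > 0 for all j with θⱼ ≤ 0, then all coordinates of θ are positive. -/
open Finset

/-- The sum of the negative parts `σ(θ) = Σⱼ max(-θⱼ, 0)`. -/
noncomputable def negPartSum (n : ℕ) (θ : Fin n → ℝ) : ℝ :=
  (1/2) * ∑ j, (|θ j| - θ j)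

/-- If `θ` minimizes `σ` on an affine subspace `A` and, among the minimizers of
`σ`, also minimizes the number of nonpositive coordinates, and if there is a
direction `v` tangent to `A` with `vⱼ > 0` for every `j` with `θⱼ ≤ 0`, then
in fact all coordinates of `θ` are strictly positive. -/
theorem lex_minimizer_all_positive (n : ℕ) (A : AffineSubspace ℝ (Fin n → ℝ))
    (θ : Fin n → ℝ) (hθA : θ ∈ A)
    (hmin : ∀ η ∈ A, negPartSum n θ ≤ negPartSum n η)
    (hlex : ∀ η ∈ A, negPartSum n η = negPartSum n θ →
      {j | θ j ≤ 0}.ncard ≤ {j | η j ≤ 0}.ncard)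
    (v : Fin n → ℝ) (hv : v ∈ A.direction)
    (hvpos : ∀ j, θ j ≤ 0 → 0 < v j) :
    ∀ j, 0 < θ j := by
  intro j₀
  by_contra hj₀
  push_neg at hj₀
  have hne : (Finset.univ : Finset (Fin n)).Nonempty := ⟨j₀, Finset.mem_univ j₀⟩
  set t : ℝ := Finset.univ.inf' hne
    (fun j => if 0 < θ j then θ j / (|v j| + 1) else 1) with ht
  have habs : ∀ j : Fin n, (0:ℝ) < |v j| + 1 := fun j => by positivity
  have htpos : 0 < t := by
    rw [ht, Finset.lt_inf'_iff]
    intro j _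
    by_cases hj : 0 < θ j
    · simp only [hj, if_true]
      exact div_pos hj (habs j)
    · simp [hj]
  have hηpos : ∀ j, 0 < θ j → 0 < θ j + t * v j := by
    intro j hj
    have h1 : t ≤ θ j / (|v j| + 1) := by
      have h : t ≤ (if 0 < θ j then θ j / (|v j| + 1) else 1) :=
        Finset.inf'_le _ (Finset.mem_univ j)
      rwa [if_pos hj] at h
    have h2 : t * (|v j| + 1) ≤ θ j := by
      rw [← le_div_iff₀ (habs j)]; exact h1
    have h3 : -|v j| ≤ v j := neg_abs_le _
    nlinarith [abs_nonneg (v j)]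
  set η : Fin n → ℝ := fun j => θ j + t * v j with hη
  have hηA : η ∈ A := by
    have hmem : (t • v) +ᵥ θ ∈ A :=
      AffineSubspace.vadd_mem_of_mem_direction (SMulMemClass.smul_mem t hv) hθA
    have : η = (t • v) +ᵥ θ := by
      funext j; simp [hη, Pi.smul_apply]; ring
    rwa [this]
  have hge : ∀ j, θ j ≤ 0 → θ j ≤ η j := by
    intro j hj
    have := hvpos j hj
    have : 0 ≤ t * v j := le_of_lt (mul_pos htpos this)
    simp only [hη]; linarith
  have hcoord : ∀ j : Fin n, |η j| - η j ≤ |θ j| - θ j := by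
    intro j
    by_cases hj : 0 < θ j
    · have h1 := hηpos j hj
      rw [abs_of_pos hj, abs_of_pos h1]; simp [hη]
    · push_neg at hj
      have h1 : θ j ≤ η j := hge j hj
      rcases le_or_gt 0 (η j) with h2 | h2
      · rw [abs_of_nonneg h2, abs_of_nonpos hj]; linarith
      · rw [abs_of_neg h2, abs_of_nonpos hj]; linarith
  have hle : negPartSum n η ≤ negPartSum n θ := by
    unfold negPartSum
    have := Finset.sum_le_sum (fun j (_ : j ∈ Finset.univ) => hcoord j)
    linarith
  have heq : negPartSum n η = negPartSum n θ := le_antisymm hle (hmin η hηA)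
  -- all coordinates of θ are nonnegative
  have hnonneg : ∀ j, 0 ≤ θ j := by
    intro k
    by_contra hk
    push_neg at hk
    have hstrict : |η k| - η k < |θ k| - θ k := by
      have hk' : θ k ≤ 0 := le_of_lt hk
      have h1 : θ k < η k := by
        have := mul_pos htpos (hvpos k hk')
        simp only [hη]; linarith
      rcases le_or_gt 0 (η k) with h2 | h2
      · rw [abs_of_nonneg h2, abs_of_neg hk]; linarith
      · rw [abs_of_neg h2, abs_of_neg hk]; linarith
    have hsum : ∑ j, (|η j| - η j) < ∑ j, (|θ j| - θ j) :=
      Finset.sum_lt_sum (fun j _ => hcoord j) ⟨k, Finset.mem_univ k, hstrict⟩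
    have : negPartSum n η < negPartSum n θ := by
      unfold negPartSum; linarith
    linarith [heq.le, heq.ge]
  have hηall : ∀ j, 0 < η j := by
    intro j
    rcases lt_or_eq_of_le (hnonneg j) with h | h
    · exact hηpos j h
    · have := mul_pos htpos (hvpos j h.ge)
      simp only [hη, ← h]; linarith
  have hempty : {j | η j ≤ 0} = ∅ := by
    ext j; simp only [Set.mem_setOf_eq, Set.mem_empty_iff_false, iff_false, not_le]
    exact hηall j
  have hcard := hlex η hηA heq
  rw [hempty, Set.ncard_empty] at hcard
  have hpos : 0 < {j | θ j ≤ 0}.ncard := by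
    apply Set.ncard_pos (Set.toFinite _) |>.mpr
    exact ⟨j₀, hj₀⟩
  omega
end

section
/- Let f : ℝⁿ → ℝ be continuous on a compact convex set K, strictly concave on the interior, and suppose at every boundary point p ∈ ∂K there is a direction v into the interior with one-sided directional derivative +∞. Then the maximum of f over K is attained at a unique interior point. -/
open Filter Set Topology

/-!
An infinite one-sided slope at `p` in a direction `v` pointing into `K` means `f` increases
strictly along `p + t • v` for small `t > 0`, so no boundary point maximises `f` on `K`.
Compactness gives a maximiser, which therefore lies in the interior, and strict concavity on
the interior allows at most one maximiser there.
-/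

theorem eventually_lt_of_tendsto_slope_atTop {E : Type*} [AddCommGroup E] [Module ℝ E]
    {f : E → ℝ} {p v : E}
    (hslope : Tendsto (fun t : ℝ => (f (p + t • v) - f p) / t) (𝓝[>] 0) atTop) :
    ∀ᶠ t in 𝓝[>] (0 : ℝ), f p < f (p + t • v) := by
  filter_upwards [hslope.eventually_gt_atTop 0, self_mem_nhdsWithin] with t hpos ht
  exact sub_pos.mp ((div_pos_iff_of_pos_right ht).mp hpos)

theorem not_isMaxOn_of_tendsto_slope_atTop {E : Type*} [AddCommGroup E] [Module ℝ E]
    {f : E → ℝ} {s : Set E} {p v : E} (hmem : ∀ᶠ t in 𝓝[>] (0 : ℝ), p + t • v ∈ s)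
    (hslope : Tendsto (fun t : ℝ => (f (p + t • v) - f p) / t) (𝓝[>] 0) atTop) :
    ¬IsMaxOn f s p := fun hmax =>
  have ⟨_, hts, hlt⟩ := (hmem.and (eventually_lt_of_tendsto_slope_atTop hslope)).exists
  (hmax hts).not_gt hlt

theorem max_attained_interior_unique_general (n : ℕ) (K : Set (Fin n → ℝ))
    (hKcpt : IsCompact K)
    (hKint : (interior K).Nonempty)
    (f : (Fin n → ℝ) → ℝ) (hfc : ContinuousOn f K)
    (hconc : StrictConcaveOn ℝ (interior K) f)
    (hbdry : ∀ p ∈ K \ interior K, ∃ v : Fin n → ℝ,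
      (∃ ε > 0, ∀ t ∈ Set.Ioo (0:ℝ) ε, p + t • v ∈ interior K) ∧
      Tendsto (fun t : ℝ => (f (p + t • v) - f p) / t)
        (nhdsWithin 0 (Set.Ioi 0)) atTop) :
    ∃ x ∈ interior K, (∀ z ∈ K, f z ≤ f x) ∧
      ∀ y ∈ K, (∀ z ∈ K, f z ≤ f y) → y = x := by
  have mem_interior_of_isMaxOn : ∀ y ∈ K, IsMaxOn f K y → y ∈ interior K := by
    intro y hyK hmax
    by_contra hyi
    obtain ⟨v, ⟨ε, hε, hεv⟩, hslope⟩ := hbdry y ⟨hyK, hyi⟩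
    have hmem : ∀ᶠ t in 𝓝[>] (0 : ℝ), y + t • v ∈ K :=
      mem_of_superset (Ioo_mem_nhdsGT hε) fun t ht =>
        show y + t • v ∈ K from interior_subset (hεv t ht)
    exact not_isMaxOn_of_tendsto_slope_atTop hmem hslope hmax
  obtain ⟨x, hxK, hxmax⟩ := hKcpt.exists_isMaxOn (hKint.mono interior_subset) hfc
  have hx := mem_interior_of_isMaxOn x hxK hxmax
  refine ⟨x, hx, fun z hz => hxmax hz, fun y hyK hymax => ?_⟩
  have hymax : IsMaxOn f K y := isMaxOn_iff.mpr hymax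
  exact hconc.eq_of_isMaxOn (hymax.on_subset interior_subset) (hxmax.on_subset interior_subset)
    (mem_interior_of_isMaxOn y hyK hymax) hx

/-- Let `f` be continuous on a compact convex set `K ⊆ ℝⁿ` with nonempty
interior, strictly concave on the interior, and suppose at every boundary
point `p` there is a direction `v` pointing into the interior along which the
one-sided directional derivative of `f` is `+∞`. Then the maximum of `f` on
`K` is attained at a unique point, which lies in the interior. -/
theorem max_attained_interior_unique (n : ℕ) (K : Set (Fin n → ℝ))
    (hKcpt : IsCompact K) (hKconv : Convex ℝ K)
    (hKint : (interior K).Nonempty)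
    (f : (Fin n → ℝ) → ℝ) (hfc : ContinuousOn f K)
    (hconc : StrictConcaveOn ℝ (interior K) f)
    (hbdry : ∀ p ∈ K \ interior K, ∃ v : Fin n → ℝ,
      (∃ ε > 0, ∀ t ∈ Set.Ioo (0:ℝ) ε, p + t • v ∈ interior K) ∧
      Tendsto (fun t : ℝ => (f (p + t • v) - f p) / t)
        (nhdsWithin 0 (Set.Ioi 0)) atTop) :
    ∃ x ∈ interior K, (∀ z ∈ K, f z ≤ f x) ∧
      ∀ y ∈ K, (∀ z ∈ K, f z ≤ f y) → y = x :=
  max_attained_interior_unique_general n K hKcpt hKint f hfc hconc hbdry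
end

section
/- Discrete Stokes formula: let O' be the cell complex dual to a triangulation O of the torus, let θ : corners(O) → ℝ satisfy (i) θ_j + θ_{j'} = π - α(e) for the two corners j, j' opposite to each edge e of O, and (ii) θ_j + θ_{j'} + θ_{j''} = π for the corners of each triangle, and assume the angle weights around each vertex of O sum to 2π. Then for every subcomplex Γ of O', Σ_{ε ∈ ΔΓ} θ_{ι(ε)} = π·χ(Γ) + (1/2) Σ_{e ∈ ∂Γ} α(e*), where ΔΓ is the set of oriented dual edges pointing into Γ but not contained in Γ, and the boundary sum counts edges of Γ adjacent to a face not in Γ (with multiplicity two if both sides are outside Γ). -/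
open Finset Real

/-- A combinatorial triangulation `O = (V, E, F)` of the torus with `m`
triangles. `Cor` is the set of the `3m` corners of triangles; `tri j` is the
triangle containing the corner `j`, `vert j` its vertex, `opp j` the edge of
its triangle opposite to it; `nxt` is the counterclockwise next corner inside
each triangle (a fixed-point free rotation of order 3 on each fiber of `tri`);
`sgm j` is the other corner opposite to the same edge `opp j`, in the triangle
adjacent across that edge.  The cardinality axioms encode `|F| = m`,
`2|E| = 3m`, `2|V| = m` (so `χ = V - E + F = 0`, as for the torus), and the
last axiom says that the two endpoints of an edge (namely the vertices of the
two other corners of an adjacent triangle) do not depend, as an unordered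
pair, on the side from which they are computed. -/
structure TorusTriangulation (Cor F E V : Type*)
    [Fintype Cor] [DecidableEq Cor] [Fintype F] [DecidableEq F]
    [Fintype E] [DecidableEq E] [Fintype V] [DecidableEq V] where
  m : ℕ
  hm : 0 < m
  tri : Cor → F
  vert : Cor → V
  opp : Cor → E
  nxt : Cor → Cor
  sgm : Cor → Cor
  card_cor : Fintype.card Cor = 3 * m
  card_faces : Fintype.card F = m
  card_edges : 2 * Fintype.card E = 3 * m
  card_verts : 2 * Fintype.card V = m
  tri_nxt : ∀ j, tri (nxt j) = tri j
  nxt_nxt_nxt : ∀ j, nxt (nxt (nxt j)) = j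
  nxt_ne : ∀ j, nxt j ≠ j
  tri_fiber : ∀ j k, tri j = tri k → k = j ∨ k = nxt j ∨ k = nxt (nxt j)
  sgm_sgm : ∀ j, sgm (sgm j) = j
  sgm_ne : ∀ j, sgm j ≠ j
  opp_sgm : ∀ j, opp (sgm j) = opp j
  opp_fiber : ∀ j k, opp j = opp k → k = j ∨ k = sgm j
  opp_surj : Function.Surjective opp
  endpoints_sgm : ∀ j, ({vert (nxt j), vert (nxt (nxt j))} : Multiset V) =
    {vert (nxt (sgm j)), vert (nxt (nxt (sgm j)))}

variable {Cor F E V : Type*}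
    [Fintype Cor] [DecidableEq Cor] [Fintype F] [DecidableEq F]
    [Fintype E] [DecidableEq E] [Fintype V] [DecidableEq V]

/-!
The corners of the triangles of `Γ` split into those whose opposite edge lies in `Γ` and the
discrete boundary `ΔΓ`. The triangle equations give `π` per dual vertex of `Γ`, the edge
equations pair the corners across each dual edge of `Γ` and give `π - α(e)` per edge, and the
vertex condition, read at the corners of the dual faces of `Γ`, turns the `α`-weights of the
sides of dual edges lying inside `Γ` into `2π` per dual face. What is left of the `α`-weights
is the boundary sum.
-/

section FiberSums

variable {ι κ M : Type*} [Fintype ι] [AddCommMonoid M]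

lemma Finset.sum_filter_mem_eq_card_smul [DecidableEq κ] (p : ι → κ) (S : Finset κ)
    (f : ι → M) (c : M) (h : ∀ x ∈ S, ∑ i ∈ univ.filter (fun i => p i = x), f i = c) :
    ∑ i ∈ univ.filter (fun i => p i ∈ S), f i = #S • c := by
  rw [← sum_fiberwise_eq_sum_filter, sum_congr rfl h, sum_const]

lemma Finset.sum_filter_ite_perm (φ : Equiv.Perm ι) (p q : ι → Prop)
    [DecidablePred p] [DecidablePred q] (hqp : ∀ i, q (φ i) → p i) (g : ι → M) :
    ∑ i ∈ univ.filter p, (if q (φ i) then g i else 0)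
      = ∑ i ∈ univ.filter q, g (φ.symm i) := by
  rw [sum_ite, sum_const_zero, add_zero, filter_filter]
  refine sum_equiv φ (fun i => ?_) (fun i _ => by simp)
  simpa using hqp i

end FiberSums

namespace TorusTriangulation

variable (T : TorusTriangulation Cor F E V) {M : Type*} [AddCommMonoid M]

@[simps!]
def nxtPerm : Equiv.Perm Cor where
  toFun := T.nxt
  invFun := T.nxt ∘ T.nxt
  left_inv := T.nxt_nxt_nxt
  right_inv := T.nxt_nxt_nxt

lemma nxt_nxt_ne (j : Cor) : T.nxt (T.nxt j) ≠ j := fun h =>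
  T.nxt_ne j (by simpa [T.nxt_nxt_nxt] using congrArg T.nxt h.symm)

lemma nxt_nxt_ne_nxt (j : Cor) : T.nxt (T.nxt j) ≠ T.nxt j := fun h =>
  T.nxt_ne j (T.nxtPerm.injective h)

lemma filter_tri_eq (j : Cor) :
    univ.filter (fun k => T.tri k = T.tri j) = {j, T.nxt j, T.nxt (T.nxt j)} := by
  ext k
  simp only [mem_filter, mem_univ, true_and, mem_insert, mem_singleton]
  refine ⟨T.tri_fiber j k ∘ Eq.symm, ?_⟩
  rintro (rfl | rfl | rfl) <;> simp [T.tri_nxt]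

lemma sum_filter_tri_eq (f : Cor → M) (j : Cor) :
    ∑ k ∈ univ.filter (fun k => T.tri k = T.tri j), f k
      = f j + f (T.nxt j) + f (T.nxt (T.nxt j)) := by
  have hj : j ∉ ({T.nxt j, T.nxt (T.nxt j)} : Finset Cor) := by
    simp [(T.nxt_ne j).symm, (T.nxt_nxt_ne j).symm]
  rw [T.filter_tri_eq, sum_insert hj, sum_pair (T.nxt_nxt_ne_nxt j).symm, add_assoc]

lemma card_filter_tri_eq (j : Cor) : #(univ.filter (fun k => T.tri k = T.tri j)) = 3 := by
  rw [card_eq_sum_ones, T.sum_filter_tri_eq]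

/-- Every fiber of `tri` that is nonempty has three corners, so `3m` corners fill all `m` faces. -/
lemma tri_surjective : Function.Surjective T.tri := by
  have hcard : Fintype.card Cor = 3 * #(univ.image T.tri) := by
    rw [← card_univ, card_eq_sum_card_image T.tri, mul_comm, ← smul_eq_mul, ← sum_const]
    refine sum_congr rfl fun x hx => ?_
    obtain ⟨j, -, rfl⟩ := mem_image.mp hx
    exact T.card_filter_tri_eq j
  have himage : univ.image T.tri = univ :=
    eq_univ_of_card _ (by have := T.card_cor; have := T.card_faces; omega)
  intro x
  obtain ⟨j, -, hj⟩ := mem_image.mp (himage ▸ mem_univ x)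
  exact ⟨j, hj⟩

lemma sum_filter_opp_eq (f : Cor → M) (j : Cor) :
    ∑ k ∈ univ.filter (fun k => T.opp k = T.opp j), f k = f j + f (T.sgm j) := by
  have hfib : univ.filter (fun k => T.opp k = T.opp j) = {j, T.sgm j} := by
    ext k
    simp only [mem_filter, mem_univ, true_and, mem_insert, mem_singleton]
    refine ⟨T.opp_fiber j k ∘ Eq.symm, ?_⟩
    rintro (rfl | rfl) <;> simp [T.opp_sgm]
  rw [hfib, sum_pair (T.sgm_ne j).symm]

lemma sum_filter_tri_mem_of_sum_eq (f : Cor → M) (c : M)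
    (hf : ∀ j, f j + f (T.nxt j) + f (T.nxt (T.nxt j)) = c) (S : Finset F) :
    ∑ j ∈ univ.filter (fun j => T.tri j ∈ S), f j = #S • c := by
  refine sum_filter_mem_eq_card_smul _ _ _ _ fun x _ => ?_
  obtain ⟨j, rfl⟩ := T.tri_surjective x
  rw [T.sum_filter_tri_eq, hf]

lemma sum_filter_opp_mem_of_sum_eq (f : Cor → M) (g : E → M)
    (hf : ∀ j, f j + f (T.sgm j) = g (T.opp j)) (S : Finset E) :
    ∑ j ∈ univ.filter (fun j => T.opp j ∈ S), f j = ∑ e ∈ S, g e := by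
  rw [← sum_fiberwise_eq_sum_filter]
  refine sum_congr rfl fun e _ => ?_
  obtain ⟨j, rfl⟩ := T.opp_surj e
  rw [T.sum_filter_opp_eq, hf]

/-- Substitute `k = nxt j`, resp. `k = nxt² j`: the edge opposite `j` is then a side of the
corner `k`, so it lies in `EG` as soon as `vert k ∈ FG`. -/
lemma sum_filter_opp_mem_ite_vert_mem (EG : Finset E) (FG : Finset V)
    (hclosF : ∀ j, T.vert j ∈ FG → T.opp (T.nxt j) ∈ EG ∧ T.opp (T.nxt (T.nxt j)) ∈ EG)
    (g : E → M) :
    ∑ j ∈ univ.filter (fun j => T.opp j ∈ EG),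
        ((if T.vert (T.nxt j) ∈ FG then g (T.opp j) else 0) +
         (if T.vert (T.nxt (T.nxt j)) ∈ FG then g (T.opp j) else 0))
      = ∑ j ∈ univ.filter (fun j => T.vert j ∈ FG),
          (g (T.opp (T.nxt j)) + g (T.opp (T.nxt (T.nxt j)))) := by
  have hnxt := sum_filter_ite_perm T.nxtPerm (fun j => T.opp j ∈ EG)
    (fun j => T.vert j ∈ FG) (fun j h => by simpa [T.nxt_nxt_nxt] using (hclosF _ h).2)
    (fun j => g (T.opp j))
  have hnxt2 := sum_filter_ite_perm T.nxtPerm.symm (fun j => T.opp j ∈ EG)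
    (fun j => T.vert j ∈ FG) (fun j h => by simpa [T.nxt_nxt_nxt] using (hclosF _ h).1)
    (fun j => g (T.opp j))
  simp only [nxtPerm_apply, nxtPerm_symm_apply, Equiv.symm_symm] at hnxt hnxt2
  rw [sum_add_distrib, hnxt, hnxt2, ← sum_add_distrib]
  exact sum_congr rfl fun j _ => add_comm _ _

end TorusTriangulation

/-- **Discrete Stokes formula.**  Let `θ` satisfy the edge equations
`θⱼ + θ_{σj} = π - α(opp j)` and the triangle equations
`θⱼ + θ_{nxt j} + θ_{nxt² j} = π`, and assume the `α`-weights around each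
vertex sum to `2π` (each corner at `v` sees its two incident edges, so the
doubled count below equals `4π`).  Let `Γ` be a subcomplex of the dual
complex, given by its dual vertices `VG ⊆ F`, dual edges `EG ⊆ E` and dual
faces `FG ⊆ V`, closed under taking boundaries.  Then the sum of `θ` over the
discrete boundary `ΔΓ` (oriented dual edges, i.e. corners `j`, pointing into
`Γ` but not contained in it) equals `π·χ(Γ)` plus half the sum of `α(e*)`
over boundary edges of `Γ`, each edge counted once for each of its two sides
adjacent to a dual face outside `Γ`; since every such (edge, side) pair is
seen by the two corners opposite the edge, the factor is `1/4` below. -/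
theorem discrete_stokes_formula (T : TorusTriangulation Cor F E V)
    (θ : Cor → ℝ) (α : E → ℝ)
    (hedge : ∀ j, θ j + θ (T.sgm j) = π - α (T.opp j))
    (htri : ∀ j, θ j + θ (T.nxt j) + θ (T.nxt (T.nxt j)) = π)
    (hvert : ∀ v : V,
      ∑ j ∈ univ.filter (fun j => T.vert j = v),
        (α (T.opp (T.nxt j)) + α (T.opp (T.nxt (T.nxt j)))) = 4 * π)
    (VG : Finset F) (EG : Finset E) (FG : Finset V)
    (hclosE : ∀ j, T.opp j ∈ EG → T.tri j ∈ VG)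
    (hclosF : ∀ j, T.vert j ∈ FG →
      T.opp (T.nxt j) ∈ EG ∧ T.opp (T.nxt (T.nxt j)) ∈ EG) :
    ∑ j ∈ univ.filter (fun j => T.tri j ∈ VG ∧ T.opp j ∉ EG), θ j
      = π * ((VG.card : ℝ) - (EG.card : ℝ) + (FG.card : ℝ))
        + (1/4) * ∑ j ∈ univ.filter (fun j => T.opp j ∈ EG),
            ((if T.vert (T.nxt j) ∈ FG then 0 else α (T.opp j)) +
             (if T.vert (T.nxt (T.nxt j)) ∈ FG then 0 else α (T.opp j))) := by
  set B := univ.filter (fun j => T.opp j ∈ EG)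
  have hBA : B ⊆ univ.filter (fun j => T.tri j ∈ VG) :=
    monotone_filter_right _ fun j _ => hclosE j
  have hfaces := T.sum_filter_tri_mem_of_sum_eq θ π htri VG
  have hedges := T.sum_filter_opp_mem_of_sum_eq θ (fun e => π - α e) hedge EG
  have hα : ∑ j ∈ B, α (T.opp j) = ∑ e ∈ EG, 2 * α e :=
    T.sum_filter_opp_mem_of_sum_eq _ _ (fun j => by rw [T.opp_sgm, two_mul]) EG
  have hverts := T.sum_filter_opp_mem_ite_vert_mem EG FG hclosF α
  rw [sum_filter_mem_eq_card_smul _ _ _ _ fun v _ => hvert v] at hverts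
  have hbdry : ∑ j ∈ B, ((if T.vert (T.nxt j) ∈ FG then 0 else α (T.opp j)) +
        (if T.vert (T.nxt (T.nxt j)) ∈ FG then 0 else α (T.opp j)))
      = ∑ j ∈ B, 2 * α (T.opp j) - ∑ j ∈ B,
        ((if T.vert (T.nxt j) ∈ FG then α (T.opp j) else 0) +
         (if T.vert (T.nxt (T.nxt j)) ∈ FG then α (T.opp j) else 0)) := by
    rw [← sum_sub_distrib]
    exact sum_congr rfl fun j _ => by split_ifs <;> ring
  rw [filter_and_not, sum_sdiff_eq_sub hBA, hbdry, hverts, hfaces, hedges, ← mul_sum, hα,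
    ← mul_sum, sum_sub_distrib, sum_const, nsmul_eq_mul, nsmul_eq_mul, nsmul_eq_mul]
  ring
end

section
/- Consider the linear system on ℝ^{3m} given by: (i) for each of the 3m/2 edges, the sum of the two opposite corner-variables equals π - α(e); (ii) for each of the m triangles, the sum of its three corner-variables equals π. Assuming α satisfies the vertex condition (the α-weights around each vertex sum to 2π) and the torus is connected, the space of linear relations between these 5m/2 equations is exactly one-dimensional: the sum of all equations (i) equals the sum of all equations (ii), both right-hand sides being mπ. -/
/-!
A relation with coefficients `lam` on the edge equations and `mu` on the triangle equations
vanishes on `θⱼ` exactly when `lam (opp j) + mu (tri j) = 0`. Comparing the corners `j` and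
`sgm j`, which share their opposite edge, shows that `mu` takes the same value on adjacent
triangles, hence is constant on the connected dual graph, and then `lam = -mu` is constant too.
For the right-hand sides, summing the vertex condition over all vertices counts each edge weight
four times, so `Σ α = |V| π = m π / 2`, and `Σ (π - α) = (3m/2) π - (m/2) π = m π`.
-/

open Finset Real

variable {Cor F E V : Type*}
    [Fintype Cor] [DecidableEq Cor] [Fintype F] [DecidableEq F]
    [Fintype E] [DecidableEq E] [Fintype V] [DecidableEq V]

namespace TorusTriangulation

variable (T : TorusTriangulation Cor F E V)

theorem nxt_bijective : Function.Bijective T.nxt :=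
  ⟨Function.LeftInverse.injective (g := T.nxt ∘ T.nxt) T.nxt_nxt_nxt,
    Function.RightInverse.surjective (g := T.nxt ∘ T.nxt) T.nxt_nxt_nxt⟩

theorem sum_comp_nxt {M : Type*} [AddCommMonoid M] (g : Cor → M) :
    ∑ j, g (T.nxt j) = ∑ j, g j :=
  Fintype.sum_bijective T.nxt T.nxt_bijective _ _ fun _ => rfl

theorem filter_opp_eq_pair (j : Cor) :
    univ.filter (fun k => T.opp k = T.opp j) = {j, T.sgm j} := by
  ext k
  simp only [mem_filter, mem_univ, true_and, mem_insert, mem_singleton]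
  constructor
  · exact fun h => T.opp_fiber j k h.symm
  · rintro (rfl | rfl)
    · rfl
    · exact T.opp_sgm j

/-- Every edge is opposite to exactly two corners. -/
theorem sum_comp_opp {M : Type*} [AddCommMonoid M] (g : E → M) :
    ∑ j, g (T.opp j) = 2 • ∑ e, g e := by
  rw [← sum_fiberwise univ T.opp, smul_sum]
  refine sum_congr rfl fun e _ => ?_
  obtain ⟨j, rfl⟩ := T.opp_surj e
  rw [T.filter_opp_eq_pair, sum_insert (by simpa using (T.sgm_ne j).symm), sum_singleton,
    T.opp_sgm, two_nsmul]

theorem tri_sgm_eq_of_relation {lam : E → ℝ} {mu : F → ℝ}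
    (hrel : ∀ j, lam (T.opp j) + mu (T.tri j) = 0) (j : Cor) :
    mu (T.tri (T.sgm j)) = mu (T.tri j) := by
  have h := hrel (T.sgm j)
  rw [T.opp_sgm] at h
  linarith [hrel j]

theorem exists_const_of_relation
    (hconn : ∀ f f' : F, Relation.ReflTransGen
      (fun g g' => ∃ j, T.tri j = g ∧ T.tri (T.sgm j) = g') f f')
    {lam : E → ℝ} {mu : F → ℝ} (hrel : ∀ j, lam (T.opp j) + mu (T.tri j) = 0) :
    ∃ c : ℝ, (∀ e, lam e = c) ∧ (∀ f, mu f = -c) := by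
  have hmu_const (f f' : F) : mu f = mu f' := by
    induction hconn f f' with
    | refl => rfl
    | tail _ hstep ih =>
      obtain ⟨j, rfl, rfl⟩ := hstep
      rw [ih, T.tri_sgm_eq_of_relation hrel]
  obtain ⟨j₀⟩ : Nonempty Cor :=
    Fintype.card_pos_iff.mp (by rw [T.card_cor]; exact Nat.mul_pos three_pos T.hm)
  refine ⟨-mu (T.tri j₀), fun e => ?_, fun f => by rw [neg_neg, hmu_const f]⟩
  obtain ⟨j, rfl⟩ := T.opp_surj e
  linarith [hrel j, hmu_const (T.tri j) (T.tri j₀)]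

theorem sum_weights_eq_card_verts_mul_pi (α : E → ℝ)
    (hvert : ∀ v : V,
      ∑ j ∈ univ.filter (fun j => T.vert j = v),
        (α (T.opp (T.nxt j)) + α (T.opp (T.nxt (T.nxt j)))) = 4 * π) :
    ∑ e, α e = Fintype.card V * π := by
  have hcount : ∑ j, (α (T.opp (T.nxt j)) + α (T.opp (T.nxt (T.nxt j)))) = 4 * ∑ e, α e := by
    rw [sum_add_distrib, T.sum_comp_nxt (fun j => α (T.opp (T.nxt j))),
      T.sum_comp_nxt (fun j => α (T.opp j)), T.sum_comp_opp, nsmul_eq_mul]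
    ring
  have htotal := sum_fiberwise univ T.vert
    fun j => α (T.opp (T.nxt j)) + α (T.opp (T.nxt (T.nxt j)))
  rw [sum_congr rfl fun v _ => hvert v, sum_const, card_univ, nsmul_eq_mul, hcount] at htotal
  linarith

theorem sum_pi_sub_weights_eq (α : E → ℝ)
    (hvert : ∀ v : V,
      ∑ j ∈ univ.filter (fun j => T.vert j = v),
        (α (T.opp (T.nxt j)) + α (T.opp (T.nxt (T.nxt j)))) = 4 * π) :
    ∑ e, (π - α e) = T.m * π := by
  have hE : (2 * Fintype.card E : ℝ) = 3 * T.m := by exact_mod_cast T.card_edges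
  have hV : (2 * Fintype.card V : ℝ) = T.m := by exact_mod_cast T.card_verts
  rw [sum_sub_distrib, sum_const, card_univ, nsmul_eq_mul,
    T.sum_weights_eq_card_verts_mul_pi α hvert]
  linear_combination (π / 2) * hE - (π / 2) * hV

end TorusTriangulation

/-- In `hvert` every edge at `v` is counted twice, once from each triangle side, hence `4 * π`. -/
theorem relation_space_one_dimensional (T : TorusTriangulation Cor F E V)
    (α : E → ℝ)
    (hconn : ∀ f f' : F, Relation.ReflTransGen
      (fun g g' => ∃ j, T.tri j = g ∧ T.tri (T.sgm j) = g') f f')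
    (hvert : ∀ v : V,
      ∑ j ∈ Finset.univ.filter (fun j => T.vert j = v),
        (α (T.opp (T.nxt j)) + α (T.opp (T.nxt (T.nxt j)))) = 4 * π) :
    (∀ (lam : E → ℝ) (mu : F → ℝ),
      (∀ j : Cor, lam (T.opp j) + mu (T.tri j) = 0) →
      ∃ c : ℝ, (∀ e, lam e = c) ∧ (∀ f, mu f = -c)) ∧
    (∑ e : E, (π - α e)) = (T.m : ℝ) * π :=
  ⟨fun _ _ hrel => T.exists_const_of_relation hconn hrel, T.sum_pi_sub_weights_eq α hvert⟩
end

section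
/- Let Φ : ℝ^{3m} → ℝ^{3m} be the linear map sending the basis vector e_j to e_{j''} - e_{j'}, where j, j', j'' are the counterclockwise-ordered corner labels of the triangle containing corner j. If θ satisfies the edge equations θ_j + θ_{j'} = π - α(e) and the triangle equations θ_j + θ_{j'} + θ_{j''} = π, then for any oriented transverse path γ with associated vector T_γ (whose j-th coordinate counts algebraically the traversals of the corner j), θ + Φ(T_γ) also satisfies both families of equations. -/
open Finset Real

variable {Cor F E V : Type*}
    [Fintype Cor] [DecidableEq Cor] [Fintype F] [DecidableEq F]
    [Fintype E] [DecidableEq E] [Fintype V] [DecidableEq V]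

namespace TorusTriangulation

variable (T : TorusTriangulation Cor F E V)

/-- A crossing of a triangle by a transverse path is recorded as a pair
`(j, b)`: the path pivots around the corner `j`, and `b = true` when the path
makes a left (pivots counterclockwise, entering through the edge `opp (nxt² j)`
and exiting through the edge `opp (nxt j)`), `b = false` for a right. -/
def exitCorner (c : Cor × Bool) : Cor :=
  if c.2 then T.nxt c.1 else T.nxt (T.nxt c.1)

/-- The corner of the entry edge of a crossing (see `exitCorner`). -/
def entryCorner (c : Cor × Bool) : Cor :=
  if c.2 then T.nxt (T.nxt c.1) else T.nxt c.1

/-- A closed transverse path, given as a cyclic sequence of `n + 1` triangle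
crossings: the exit edge of each crossing is the entry edge of the next one,
seen from the adjacent triangle (opposite corners exchanged by `sgm`). -/
def IsTransversePath {n : ℕ} (γ : Fin (n + 1) → Cor × Bool) : Prop :=
  ∀ s : Fin (n + 1), T.entryCorner (γ (s + 1)) = T.sgm (T.exitCorner (γ s))

/-- The vector `T_γ ∈ ℝ^{3m}`: its `j`-th coordinate is the algebraic number
of times `γ` traverses the angular sector of the corner `j` (left traversals
count `+1`, right traversals `-1`). -/
def pathVector {n : ℕ} (γ : Fin (n + 1) → Cor × Bool) : Cor → ℝ :=
  fun j => ∑ s : Fin (n + 1),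
    ((if γ s = (j, true) then (1 : ℝ) else 0) -
     (if γ s = (j, false) then (1 : ℝ) else 0))

/-- The linear map `Φ : ℝ^{3m} → ℝ^{3m}` sending the basis vector `e_j` to
`e_{j''} - e_{j'}`, where `(j, j', j'') = (j, nxt j, nxt² j)` are the
counterclockwise-ordered corners of the triangle of `j`; in coordinates,
`(Φ v) j = v (nxt j) - v (nxt² j)`. -/
def phi (v : Cor → ℝ) : Cor → ℝ :=
  fun j => v (T.nxt j) - v (T.nxt (T.nxt j))

end TorusTriangulation

open TorusTriangulation

/-!
`Φ(T_γ)_j` is the number of times `γ` enters the triangle of `j` through the edge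
opposite to `j`, minus the number of times it leaves through that edge. Every exit of a
closed transverse path through an edge is the next crossing's entry from the other side,
so the two opposite corners of an edge receive opposite values; and `Φ v` sums to zero
over every triangle, whatever `v`. Adding `Φ(T_γ)` therefore changes neither family of
sums.
-/

namespace TorusTriangulation

variable (T : TorusTriangulation Cor F E V)

lemma nxt_eq_iff {a b : Cor} : T.nxt a = b ↔ a = T.nxt (T.nxt b) := by
  constructor
  · rintro rfl; rw [T.nxt_nxt_nxt]
  · rintro rfl; exact T.nxt_nxt_nxt b

lemma sgm_injective : Function.Injective T.sgm :=
  Function.LeftInverse.injective T.sgm_sgm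

lemma phi_add_phi_nxt_add_phi_nxt_nxt (v : Cor → ℝ) (j : Cor) :
    T.phi v j + T.phi v (T.nxt j) + T.phi v (T.nxt (T.nxt j)) = 0 := by
  simp only [phi, T.nxt_nxt_nxt]
  ring

def entryCount {n : ℕ} (γ : Fin (n + 1) → Cor × Bool) (j : Cor) : ℝ :=
  ∑ s, if T.entryCorner (γ s) = j then 1 else 0

def exitCount {n : ℕ} (γ : Fin (n + 1) → Cor × Bool) (j : Cor) : ℝ :=
  ∑ s, if T.exitCorner (γ s) = j then 1 else 0

lemma phi_crossing (c : Cor × Bool) (j : Cor) :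
    ((if c = (T.nxt j, true) then (1 : ℝ) else 0) - (if c = (T.nxt j, false) then 1 else 0)) -
      ((if c = (T.nxt (T.nxt j), true) then 1 else 0) -
        (if c = (T.nxt (T.nxt j), false) then 1 else 0)) =
      (if T.entryCorner c = j then 1 else 0) - (if T.exitCorner c = j then 1 else 0) := by
  obtain ⟨c, _ | _⟩ := c
  · simp [entryCorner, exitCorner, T.nxt_eq_iff, T.nxt_nxt_nxt]
    ring
  · simp [entryCorner, exitCorner, T.nxt_eq_iff, T.nxt_nxt_nxt]

lemma phi_pathVector {n : ℕ} (γ : Fin (n + 1) → Cor × Bool) (j : Cor) :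
    T.phi (pathVector γ) j = T.entryCount γ j - T.exitCount γ j := by
  simp only [phi, pathVector, entryCount, exitCount, ← Finset.sum_sub_distrib, T.phi_crossing]

lemma IsTransversePath.entryCount_sgm {n : ℕ} {γ : Fin (n + 1) → Cor × Bool}
    (hγ : T.IsTransversePath γ) (j : Cor) :
    T.entryCount γ (T.sgm j) = T.exitCount γ j := calc
  T.entryCount γ (T.sgm j) = ∑ s, if T.entryCorner (γ (s + 1)) = T.sgm j then 1 else 0 :=
    (Equiv.sum_comp (Equiv.addRight 1) _).symm
  _ = T.exitCount γ j := by simp only [hγ _, T.sgm_injective.eq_iff, exitCount]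

lemma IsTransversePath.phi_add_phi_sgm {n : ℕ} {γ : Fin (n + 1) → Cor × Bool}
    (hγ : T.IsTransversePath γ) (j : Cor) :
    T.phi (pathVector γ) j + T.phi (pathVector γ) (T.sgm j) = 0 := by
  have hexit := hγ.entryCount_sgm T (T.sgm j)
  rw [T.sgm_sgm] at hexit
  rw [T.phi_pathVector, T.phi_pathVector, hγ.entryCount_sgm, hexit]
  ring

end TorusTriangulation

/-- Proposition 3.2: if `θ` satisfies the edge equations
`θⱼ + θ_{σj} = π - α(opp j)` and the triangle equations
`θⱼ + θ_{nxt j} + θ_{nxt² j} = π`, then for any closed transverse path `γ`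
the deformed point `θ + Φ(T_γ)` satisfies both families of equations. -/
theorem deform_preserves_equations (T : TorusTriangulation Cor F E V)
    (θ : Cor → ℝ) (α : E → ℝ)
    (hedge : ∀ j, θ j + θ (T.sgm j) = π - α (T.opp j))
    (htri : ∀ j, θ j + θ (T.nxt j) + θ (T.nxt (T.nxt j)) = π)
    {n : ℕ} (γ : Fin (n + 1) → Cor × Bool) (hγ : T.IsTransversePath γ) :
    (∀ j, (θ j + T.phi (pathVector γ) j) +
        (θ (T.sgm j) + T.phi (pathVector γ) (T.sgm j)) = π - α (T.opp j)) ∧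
    (∀ j, (θ j + T.phi (pathVector γ) j) +
        (θ (T.nxt j) + T.phi (pathVector γ) (T.nxt j)) +
        (θ (T.nxt (T.nxt j)) + T.phi (pathVector γ) (T.nxt (T.nxt j))) = π) := by
  refine ⟨fun j => ?_, fun j => ?_⟩
  · have := hγ.phi_add_phi_sgm T j
    linarith [hedge j]
  · have := T.phi_add_phi_nxt_add_phi_nxt_nxt (pathVector γ) j
    linarith [htri j]
end
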